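/- arXiv:1111.6603 — 2 statements merged into one kernel-verified Lean document; each statement's English description precedes it below -/
import Mathlib

section
/- The operators d and d† commute with the traceless (sl(4)) parts of both gl(4) copies; precisely, for all 1 ≤ α, β ≤ 4: [K^+_{αβ}, d] = δ_{αβ} d, [K^-_{αβ}, d] = −δ_{αβ} d, [K^+_{αβ}, d†] = −δ_{αβ} d†, and [K^-_{αβ}, d†] = δ_{αβ} d† as endomorphisms of R. In particular [K^±_{αβ}, d] = [K^±_{αβ}, d†] = 0 whenever α ≠ β. -/
/-!
Both `d` and `d†` are images of the one polynomial `det X`: under `f ↦ (multiplication by f)` and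
under `f ↦ f(∂)` (substituting the commuting partial derivatives). Since the `K^±_{αβ}` are
derivations, their commutators with these operators are again images of first-order expressions
in `f`, e.g. `[K^+_{αβ}, f·] = (Σ_γ x_{βγ} ∂_{αγ} f)·` and `[K^+_{αβ}, f(∂)] = -(Σ_γ x_{αγ} ∂_{βγ} f)(∂)`.
For `f = det X` one has `∂f/∂x_{ij} = (adj X)_{ji}`, so these sums are entries of
`X · adj X = adj X · X = (det X) · 1`.
-/

noncomputable section

open scoped BigOperators

/-- The polynomial ring `R = ℂ[x_{αβ} : 1 ≤ α, β ≤ 4]` in 16 commuting variables. -/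
abbrev R4 : Type := MvPolynomial (Fin 4 × Fin 4) ℂ

/-- The operator of multiplication by the variable `x_{a b}` on `R`. -/
def XOp (a b : Fin 4) : Module.End ℂ R4 :=
  LinearMap.mulLeft ℂ (MvPolynomial.X (a, b))

/-- The partial derivative operator `∂/∂x_{a b}` on `R`. -/
def DOp (a b : Fin 4) : Module.End ℂ R4 :=
  (MvPolynomial.pderiv (a, b)).toLinearMap

/-- `K^+_{αβ} := Σ_γ x_{βγ} ∂/∂x_{αγ}`. -/
def Kp (a b : Fin 4) : Module.End ℂ R4 := ∑ c : Fin 4, XOp b c * DOp a c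

/-- `K^-_{αβ} := −Σ_γ x_{γβ} ∂/∂x_{γα}`. -/
def Km (a b : Fin 4) : Module.End ℂ R4 := -∑ c : Fin 4, XOp c b * DOp c a

/-- `d` : the operator of multiplication by `det((x_{αβ}))` on `R`. -/
def dOp : Module.End ℂ R4 :=
  LinearMap.mulLeft ℂ (Matrix.det (Matrix.of fun a b : Fin 4 => MvPolynomial.X (a, b)))

/-- `d†` : the determinant of the 4×4 matrix of operators whose `(α,β)` entry is `∂/∂x_{βα}`,
written as the usual signed sum over permutations (any ordering of the factors in each product
gives the same operator, since partial derivative operators commute). -/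
def ddagOp : Module.End ℂ R4 :=
  ∑ σ : Equiv.Perm (Fin 4),
    (Equiv.Perm.sign σ : ℤ) • (List.ofFn fun a : Fin 4 => DOp (σ a) a).prod

open MvPolynomial Matrix

-- `Module.End R M` is not found to be a `LieRing` when `M`'s additive structure is elaborated as
-- an `AddCommMonoid` (as in `R4`), so the needed rules are proved for the associative commutator.
namespace Ring

variable {A : Type*} [Ring A]

theorem mul_lie (x y z : A) : ⁅x * y, z⁆ = x * ⁅y, z⁆ + ⁅x, z⁆ * y := by
  simp only [Ring.lie_def, mul_sub, sub_mul, mul_assoc]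
  abel

theorem lie_mul (x y z : A) : ⁅x, y * z⁆ = ⁅x, y⁆ * z + y * ⁅x, z⁆ := by
  simp only [Ring.lie_def, mul_sub, sub_mul, mul_assoc]
  abel

theorem neg_lie (x y : A) : ⁅-x, y⁆ = -⁅x, y⁆ := by
  simp only [Ring.lie_def, neg_mul, mul_neg, neg_sub, sub_neg_eq_add]
  abel

theorem sum_lie {ι : Type*} (s : Finset ι) (f : ι → A) (x : A) :
    ⁅∑ i ∈ s, f i, x⁆ = ∑ i ∈ s, ⁅f i, x⁆ := by
  simp only [Ring.lie_def, Finset.sum_mul, Finset.mul_sum, Finset.sum_sub_distrib]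

end Ring

namespace Derivation

variable {R A : Type*} [CommSemiring R] [CommRing A] [Algebra R A] (D : Derivation R A A)

theorem lie_toLinearMap_lmul (f : A) :
    ⁅D.toLinearMap, Algebra.lmul R A f⁆ = Algebra.lmul R A (D f) :=
  LinearMap.ext fun p => by simp [Ring.lie_def, D.leibniz, mul_comm]

theorem lie_lmul_toLinearMap (f : A) :
    ⁅Algebra.lmul R A f, D.toLinearMap⁆ = -Algebra.lmul R A (D f) :=
  LinearMap.ext fun p => by simp [Ring.lie_def, D.leibniz, mul_comm]

theorem lie_lmul_mul_toLinearMap_lmul (g f : A) :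
    ⁅Algebra.lmul R A g * D.toLinearMap, Algebra.lmul R A f⁆ = Algebra.lmul R A (g * D f) := by
  rw [Ring.mul_lie, lie_toLinearMap_lmul, ((Commute.all g f).map _).lie_eq, zero_mul, add_zero,
    map_mul]

end Derivation

namespace MvPolynomial

variable {σ R : Type*} [CommRing R]

theorem pderiv_pderiv_comm (i j : σ) (f : MvPolynomial σ R) :
    pderiv i (pderiv j f) = pderiv j (pderiv i f) := by
  classical
  induction f using MvPolynomial.induction_on with
  | C a => simp
  | add p q hp hq => simp [hp, hq]
  | mul_X p k hp =>
    simp only [pderiv_mul, map_add, hp, pderiv_X, Pi.single_apply]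
    split_ifs <;> simp; abel

theorem commute_pderiv (i j : σ) :
    Commute (pderiv i : Derivation R (MvPolynomial σ R) (MvPolynomial σ R)).toLinearMap
      (pderiv j).toLinearMap :=
  LinearMap.ext (pderiv_pderiv_comm i j)

open scoped IsMulCommutative in
/-- The constant-coefficient differential operator `f(∂)`: evaluation of `f` at the partial
derivatives, inside the commutative subalgebra of `End(R[σ])` that they generate. -/
def diffOp : MvPolynomial σ R →ₐ[R] Module.End R (MvPolynomial σ R) :=
  let S := Algebra.adjoin R (Set.range fun i : σ =>
    (pderiv i : Derivation R (MvPolynomial σ R) (MvPolynomial σ R)).toLinearMap)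
  have : IsMulCommutative S := Algebra.isMulCommutative_adjoin R (by
    rintro _ ⟨i, rfl⟩ _ ⟨j, rfl⟩
    exact commute_pderiv i j)
  S.val.comp (aeval fun i => (⟨_, Algebra.subset_adjoin ⟨i, rfl⟩⟩ : S))

@[simp]
theorem diffOp_X (i : σ) : diffOp (X i : MvPolynomial σ R) = (pderiv i).toLinearMap := by
  simp [diffOp]

theorem lie_lmul_X_diffOp (i : σ) (f : MvPolynomial σ R) :
    ⁅Algebra.lmul R (MvPolynomial σ R) (X i), diffOp f⁆ = -diffOp (pderiv i f) := by
  induction f using MvPolynomial.induction_on with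
  | C a =>
    rw [pderiv_C, map_zero, neg_zero, ← algebraMap_eq, AlgHom.commutes]
    exact (Algebra.commute_algebraMap_right _ _).lie_eq
  | add p q hp hq =>
    rw [map_add, map_add, map_add, neg_add, ← hp, ← hq]
    simp only [Ring.lie_def, mul_add, add_mul]
    abel
  | mul_X p j hp =>
    have hX : Algebra.lmul R (MvPolynomial σ R) (pderiv j (X i)) =
        diffOp (pderiv i (X j) : MvPolynomial σ R) := by
      classical
      rcases eq_or_ne i j with rfl | hij
      · rw [pderiv_X_self, map_one, map_one]
      · rw [pderiv_X_of_ne hij, pderiv_X_of_ne hij.symm, map_zero, map_zero]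
    rw [map_mul, diffOp_X, Ring.lie_mul, hp, Derivation.lie_lmul_toLinearMap, hX, pderiv_mul,
      map_add, map_mul, map_mul, diffOp_X, neg_add]
    exact congrArg₂ (· + ·) (neg_mul (diffOp (pderiv i p)) _) (mul_neg (diffOp p) _)

theorem lie_lmul_X_mul_pderiv_diffOp (j i : σ) (f : MvPolynomial σ R) :
    ⁅Algebra.lmul R (MvPolynomial σ R) (X j) * (pderiv i).toLinearMap, diffOp f⁆ =
      -diffOp (X i * pderiv j f) := by
  rw [Ring.mul_lie, ← diffOp_X, ((Commute.all (X i) f).map diffOp).lie_eq, mul_zero, zero_add,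
    lie_lmul_X_diffOp, map_mul, ((Commute.all (X i) _).map diffOp).eq]
  exact neg_mul (diffOp (pderiv j f)) (diffOp (X i))

end MvPolynomial

section Determinant

variable {n R : Type*} [Fintype n] [DecidableEq n] [CommRing R]

-- The `(j, i)` cofactor does not involve the variables of row `i`.
theorem pderiv_adjugate_mvPolynomialX (i j k : n) :
    pderiv (i, k) (adjugate (mvPolynomialX n n R) j i) = 0 := by
  let S := supported R {v : n × n | v.1 ≠ i}
  let M : Matrix n n S := fun r c => ⟨updateRow (mvPolynomialX n n R) i (Pi.single j 1) r c, by
    rcases eq_or_ne r i with rfl | hr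
    · rw [updateRow_self]
      rcases eq_or_ne c j with rfl | hc
      · rw [Pi.single_eq_same]; exact S.one_mem
      · rw [Pi.single_eq_of_ne hc]; exact S.zero_mem
    · rw [updateRow_ne hr, mvPolynomialX_apply]
      exact Algebra.subset_adjoin ⟨(r, c), hr, rfl⟩⟩
  have hS : adjugate (mvPolynomialX n n R) j i ∈ S := by
    rw [adjugate_apply]
    exact AlgHom.map_det S.val M ▸ (det M).2
  refine pderiv_eq_zero_of_notMem_vars fun h => ?_
  exact (mem_supported.1 hS h : (i, k) ∈ {v : n × n | v.1 ≠ i}) rfl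

theorem pderiv_det_mvPolynomialX (i k : n) :
    pderiv (i, k) (det (mvPolynomialX n n R)) = adjugate (mvPolynomialX n n R) k i := by
  rw [det_eq_sum_mul_adjugate_row _ i, map_sum]
  simp [pderiv_adjugate_mvPolynomialX, pderiv_X, Pi.single_apply]

theorem sum_X_row_mul_pderiv_det_mvPolynomialX (a b : n) :
    ∑ c, X (a, c) * pderiv (b, c) (det (mvPolynomialX n n R)) =
      if a = b then det (mvPolynomialX n n R) else 0 := by
  simpa [pderiv_det_mvPolynomialX, mul_apply, Matrix.one_apply] using
    congr_fun₂ (mul_adjugate (mvPolynomialX n n R)) a b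

theorem sum_X_col_mul_pderiv_det_mvPolynomialX (a b : n) :
    ∑ c, X (c, a) * pderiv (c, b) (det (mvPolynomialX n n R)) =
      if a = b then det (mvPolynomialX n n R) else 0 := by
  simpa [pderiv_det_mvPolynomialX, mul_apply, Matrix.one_apply, mul_comm, eq_comm] using
    congr_fun₂ (adjugate_mul (mvPolynomialX n n R)) b a

end Determinant

theorem dOp_eq_lmul_det : dOp = Algebra.lmul ℂ R4 (det (mvPolynomialX (Fin 4) (Fin 4) ℂ)) := rfl

theorem ddagOp_eq_diffOp_det : ddagOp = diffOp (det (mvPolynomialX (Fin 4) (Fin 4) ℂ)) := by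
  rw [det_apply, map_sum]
  refine Finset.sum_congr rfl fun σ _ => ?_
  rw [Units.smul_def, map_zsmul, ← List.prod_ofFn, map_list_prod, List.map_ofFn]
  simp only [Function.comp_def, mvPolynomialX_apply, diffOp_X]
  rfl

theorem lie_Kp_lmul (a b : Fin 4) (f : R4) :
    ⁅Kp a b, Algebra.lmul ℂ R4 f⁆ = Algebra.lmul ℂ R4 (∑ c, X (b, c) * pderiv (a, c) f) := by
  simp only [Kp, Ring.sum_lie, map_sum]
  exact Finset.sum_congr rfl fun c _ => Derivation.lie_lmul_mul_toLinearMap_lmul _ _ _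

theorem lie_Km_lmul (a b : Fin 4) (f : R4) :
    ⁅Km a b, Algebra.lmul ℂ R4 f⁆ = -Algebra.lmul ℂ R4 (∑ c, X (c, b) * pderiv (c, a) f) := by
  simp only [Km, Ring.neg_lie, Ring.sum_lie, map_sum]
  congr 1
  exact Finset.sum_congr rfl fun c _ => Derivation.lie_lmul_mul_toLinearMap_lmul _ _ _

theorem lie_Kp_diffOp (a b : Fin 4) (f : R4) :
    ⁅Kp a b, diffOp f⁆ = -diffOp (∑ c, X (a, c) * pderiv (b, c) f) := by
  simp only [Kp, Ring.sum_lie, map_sum]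
  rw [← Finset.sum_neg_distrib]
  exact Finset.sum_congr rfl fun c _ => lie_lmul_X_mul_pderiv_diffOp _ _ _

theorem lie_Km_diffOp (a b : Fin 4) (f : R4) :
    ⁅Km a b, diffOp f⁆ = diffOp (∑ c, X (c, a) * pderiv (c, b) f) := by
  simp only [Km, Ring.neg_lie, Ring.sum_lie, map_sum]
  rw [← Finset.sum_neg_distrib]
  exact Finset.sum_congr rfl fun c _ => neg_eq_iff_eq_neg.2 (lie_lmul_X_mul_pderiv_diffOp _ _ _)

theorem lie_K_dOp_ddagOp (a b : Fin 4) :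
    ⁅Kp a b, dOp⁆ = (if a = b then (1 : ℂ) else 0) • dOp ∧
    ⁅Km a b, dOp⁆ = -((if a = b then (1 : ℂ) else 0) • dOp) ∧
    ⁅Kp a b, ddagOp⁆ = -((if a = b then (1 : ℂ) else 0) • ddagOp) ∧
    ⁅Km a b, ddagOp⁆ = (if a = b then (1 : ℂ) else 0) • ddagOp := by
  rw [dOp_eq_lmul_det, ddagOp_eq_diffOp_det, lie_Kp_lmul, lie_Km_lmul, lie_Kp_diffOp,
    lie_Km_diffOp, sum_X_row_mul_pderiv_det_mvPolynomialX, sum_X_col_mul_pderiv_det_mvPolynomialX,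
    sum_X_row_mul_pderiv_det_mvPolynomialX, sum_X_col_mul_pderiv_det_mvPolynomialX]
  rcases eq_or_ne a b with rfl | hab
  · simp
  · simp [hab, hab.symm]

/-- `[K^+_{αβ}, d] = δ_{αβ} d`, `[K^-_{αβ}, d] = −δ_{αβ} d`,
`[K^+_{αβ}, d†] = −δ_{αβ} d†`, `[K^-_{αβ}, d†] = δ_{αβ} d†`; in particular all these
commutators vanish when `α ≠ β`, i.e. `d` and `d†` commute with the traceless (`sl(4)`)
parts of both `gl(4)` copies. -/
theorem statement5 :
    (∀ a b : Fin 4,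
      ⁅Kp a b, dOp⁆ = (if a = b then (1 : ℂ) else 0) • dOp ∧
      ⁅Km a b, dOp⁆ = -((if a = b then (1 : ℂ) else 0) • dOp) ∧
      ⁅Kp a b, ddagOp⁆ = -((if a = b then (1 : ℂ) else 0) • ddagOp) ∧
      ⁅Km a b, ddagOp⁆ = (if a = b then (1 : ℂ) else 0) • ddagOp) ∧
    (∀ a b : Fin 4, a ≠ b →
      ⁅Kp a b, dOp⁆ = 0 ∧ ⁅Km a b, dOp⁆ = 0 ∧
      ⁅Kp a b, ddagOp⁆ = 0 ∧ ⁅Km a b, ddagOp⁆ = 0) :=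
  ⟨lie_K_dOp_ddagOp, fun a b hab => by simpa [hab] using lie_K_dOp_ddagOp a b⟩
end
end

section
/- For any nonnegative integers a_1, a_2, a_3, a_4 with a_1 + 2a_2 + 3a_3 + 4a_4 = n, the monomial v_1^{a_1} v_2^{a_2} v_3^{a_3} v_4^{a_4} is a homogeneous polynomial of degree n in R and is a simultaneous highest-weight vector: K^+_{αβ}(v_1^{a_1} v_2^{a_2} v_3^{a_3} v_4^{a_4}) = 0 for all β > α, and K^-_{αβ}(v_1^{a_1} v_2^{a_2} v_3^{a_3} v_4^{a_4}) = 0 for all β < α. -/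
noncomputable section

open scoped BigOperators

/-- For `i : Fin 4` (representing the paper's index `i+1 ∈ {1,2,3,4}`), `v i` is the
determinant of the `(i+1)×(i+1)` matrix `B` with entries `B_{ab} = x_{5−a,b}`
(`1 ≤ a, b ≤ i+1`, written 0-indexed as `x_{(3−a)(b)}`). -/
def v (i : Fin 4) : R4 :=
  Matrix.det (Matrix.of fun a b : Fin (i.val + 1) =>
    MvPolynomial.X (⟨3 - a.val, by omega⟩, ⟨b.val, by have := b.isLt; have := i.isLt; omega⟩))

/-! The operators `K^+_{αβ}` and `-K^-_{αβ}` are derivations of `R`; on variables they rename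
row `α` to row `β` (resp. column `α` to column `β`) and kill the variables outside that row
(column). By Jacobi's formula the value of a derivation on a determinant is a sum of determinants
in which one row (column) is replaced by its image. The matrix `B^i` uses the rows `5-i, …, 4` and
the columns `1, …, i` of `x`, so for `α < β` (resp. `β < α`) the image of a row (column) of `B^i`
is zero or another row (column) of `B^i`; every summand vanishes, hence `v_i` and every monomial
in the `v_i` is killed. Homogeneity holds because `v_i` is a determinant of variables. -/

open MvPolynomial Matrix

namespace Derivation

section Product

variable {R A M : Type*} [CommSemiring R] [CommSemiring A] [AddCommMonoid M] [Algebra R A]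
  [Module A M] [Module R M] (D : Derivation R A M)

theorem leibniz_finset_prod {ι : Type*} [DecidableEq ι] (s : Finset ι) (f : ι → A) :
    D (∏ i ∈ s, f i) = ∑ i ∈ s, (∏ j ∈ s.erase i, f j) • D (f i) := by
  induction s using Finset.induction with
  | empty => simp
  | insert a s ha ih =>
    rw [Finset.prod_insert ha, leibniz, ih, Finset.sum_insert ha, Finset.erase_insert ha,
      Finset.smul_sum, add_comm]
    congr 1
    refine Finset.sum_congr rfl fun i hi => ?_
    rw [Finset.erase_insert_of_ne (ne_of_mem_of_not_mem hi ha).symm,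
      Finset.prod_insert (fun h => ha (Finset.mem_of_mem_erase h)), smul_smul]

theorem map_prod_pow_eq_zero {ι : Type*} (s : Finset ι) (f : ι → A) (e : ι → ℕ)
    (h : ∀ i ∈ s, D (f i) = 0) : D (∏ i ∈ s, f i ^ e i) = 0 :=
  Finset.prod_induction _ (fun a => D a = 0)
    (fun a b ha hb => by rw [leibniz, ha, hb, smul_zero, smul_zero, add_zero])
    D.map_one_eq_zero (fun i hi => by rw [leibniz_pow, h i hi, smul_zero, smul_zero])

end Product

section Determinant

variable {R A n : Type*} [CommSemiring R] [CommRing A] [Algebra R A] [Fintype n] [DecidableEq n]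
  (D : Derivation R A A)

theorem map_det_eq_sum_det_updateCol (M : Matrix n n A) :
    D M.det = ∑ k, (M.updateCol k fun i => D (M i k)).det := by
  simp only [det_apply, map_sum, Units.smul_def, map_zsmul, D.leibniz_finset_prod, Finset.smul_sum]
  rw [Finset.sum_comm]
  refine Finset.sum_congr rfl fun k _ => Finset.sum_congr rfl fun σ _ => ?_
  rw [← Finset.mul_prod_erase _ _ (Finset.mem_univ k), updateCol_self, smul_eq_mul, mul_comm]
  congr 2
  exact Finset.prod_congr rfl fun i hi => by rw [updateCol_ne (Finset.ne_of_mem_erase hi)]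

theorem map_det_eq_sum_det_updateRow (M : Matrix n n A) :
    D M.det = ∑ k, (M.updateRow k fun j => D (M k j)).det := by
  rw [← det_transpose, map_det_eq_sum_det_updateCol]
  refine Finset.sum_congr rfl fun k _ => ?_
  rw [updateCol_transpose, det_transpose]
  rfl

theorem map_det_eq_zero_of_rows (M : Matrix n n A)
    (h : ∀ k, (fun j => D (M k j)) = 0 ∨ ∃ k', k' ≠ k ∧ (fun j => D (M k j)) = M k') :
    D M.det = 0 := by
  rw [map_det_eq_sum_det_updateRow]
  refine Finset.sum_eq_zero fun k _ => ?_
  rcases h k with hk | ⟨k', hk', hk⟩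
  · exact det_eq_zero_of_row_eq_zero k fun j => by simp [hk]
  · refine det_zero_of_row_eq hk'.symm ?_
    rw [updateRow_self, updateRow_ne hk', hk]

theorem map_det_eq_zero_of_cols (M : Matrix n n A)
    (h : ∀ k, (fun i => D (M i k)) = 0 ∨ ∃ k', k' ≠ k ∧ (fun i => D (M i k)) = Mᵀ k') :
    D M.det = 0 := by
  rw [← det_transpose]
  exact D.map_det_eq_zero_of_rows Mᵀ h

end Determinant

end Derivation

section Polarization

variable {K ι κ : Type*} [CommSemiring K]

def rowPolarization [Fintype κ] (a b : ι) :
    Derivation K (MvPolynomial (ι × κ) K) (MvPolynomial (ι × κ) K) :=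
  ∑ c : κ, (X (b, c) : MvPolynomial (ι × κ) K) • pderiv (a, c)

def colPolarization [Fintype ι] (a b : κ) :
    Derivation K (MvPolynomial (ι × κ) K) (MvPolynomial (ι × κ) K) :=
  ∑ r : ι, (X (r, b) : MvPolynomial (ι × κ) K) • pderiv (r, a)

theorem rowPolarization_apply [Fintype κ] (a b : ι) (p : MvPolynomial (ι × κ) K) :
    rowPolarization a b p = ∑ c : κ, X (b, c) * pderiv (a, c) p := by
  rw [rowPolarization, ← Derivation.coeFnAddMonoidHom_apply, map_sum, Finset.sum_apply]
  rfl

theorem colPolarization_apply [Fintype ι] (a b : κ) (p : MvPolynomial (ι × κ) K) :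
    colPolarization a b p = ∑ r : ι, X (r, b) * pderiv (r, a) p := by
  rw [colPolarization, ← Derivation.coeFnAddMonoidHom_apply, map_sum, Finset.sum_apply]
  rfl

variable [DecidableEq ι] [DecidableEq κ]

theorem rowPolarization_X [Fintype κ] (a b r : ι) (c : κ) :
    rowPolarization (K := K) a b (X (r, c)) = if r = a then X (b, c) else 0 := by
  simp [rowPolarization_apply, Pi.single_apply, ite_and]

theorem colPolarization_X [Fintype ι] (a b : κ) (r : ι) (c : κ) :
    colPolarization (K := K) a b (X (r, c)) = if c = a then X (r, b) else 0 := by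
  simp [colPolarization_apply, Pi.single_apply, ite_and]

end Polarization

theorem Kp_eq_rowPolarization (a b : Fin 4) :
    Kp a b = ((rowPolarization a b : Derivation ℂ R4 R4) : Module.End ℂ R4) :=
  LinearMap.ext fun p => by simp [Kp, XOp, DOp, rowPolarization_apply, Module.End.mul_apply]

theorem Km_eq_neg_colPolarization (a b : Fin 4) :
    Km a b = -((colPolarization a b : Derivation ℂ R4 R4) : Module.End ℂ R4) :=
  LinearMap.ext fun p => by simp [Km, XOp, DOp, colPolarization_apply, Module.End.mul_apply]

section DetOfVariables

variable {K ι κ n : Type*} [CommRing K] [DecidableEq ι] [DecidableEq κ] [Fintype n]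
  [DecidableEq n] (f : n → ι) (g : n → κ)

theorem rowPolarization_det_X_eq_zero [Fintype κ] {a b : ι} (hab : a ≠ b)
    (h : a ∈ Set.range f → b ∈ Set.range f) :
    rowPolarization a b
      (Matrix.of fun k j => (X (f k, g j) : MvPolynomial (ι × κ) K)).det = 0 := by
  refine (rowPolarization (K := K) (κ := κ) a b).map_det_eq_zero_of_rows _ fun k => ?_
  simp only [of_apply, rowPolarization_X]
  by_cases hk : f k = a
  · obtain ⟨k', hk'⟩ := h ⟨k, hk⟩
    refine Or.inr ⟨k', fun hkk => hab (hk ▸ hkk ▸ hk'), funext fun j => ?_⟩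
    simp [hk, hk']
  · exact Or.inl (funext fun j => by simp [hk])

theorem colPolarization_det_X_eq_zero [Fintype ι] {a b : κ} (hab : a ≠ b)
    (h : a ∈ Set.range g → b ∈ Set.range g) :
    colPolarization a b
      (Matrix.of fun k j => (X (f k, g j) : MvPolynomial (ι × κ) K)).det = 0 := by
  refine (colPolarization (K := K) (ι := ι) a b).map_det_eq_zero_of_cols _ fun k => ?_
  simp only [of_apply, colPolarization_X]
  by_cases hk : g k = a
  · obtain ⟨k', hk'⟩ := h ⟨k, hk⟩
    refine Or.inr ⟨k', fun hkk => hab (hk ▸ hkk ▸ hk'), funext fun i => ?_⟩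
    simp [hk, hk']
  · exact Or.inl (funext fun i => by simp [hk])

end DetOfVariables

theorem MvPolynomial.IsHomogeneous.det {σ K n : Type*} [CommRing K] [Fintype n] [DecidableEq n]
    {M : Matrix n n (MvPolynomial σ K)} {d : ℕ} (h : ∀ i j, (M i j).IsHomogeneous d) :
    M.det.IsHomogeneous (Fintype.card n * d) := by
  rw [det_apply]
  refine IsHomogeneous.sum _ _ _ fun τ _ => ?_
  have hprod := IsHomogeneous.prod Finset.univ (fun i => M (τ i) i) (fun _ => d)
    fun i _ => h (τ i) i
  rw [Finset.sum_const, smul_eq_mul, Finset.card_univ] at hprod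
  rw [Units.smul_def, ← mem_homogeneousSubmodule] at *
  exact zsmul_mem hprod _

theorem v_isHomogeneous (i : Fin 4) : (v i).IsHomogeneous (i.val + 1) := by
  rw [← Fintype.card_fin (i.val + 1), ← mul_one (Fintype.card _)]
  exact IsHomogeneous.det fun _ _ => isHomogeneous_X ℂ _

theorem rowPolarization_v {a b : Fin 4} (hab : a < b) (i : Fin 4) :
    rowPolarization a b (v i) = 0 :=
  rowPolarization_det_X_eq_zero _ _ hab.ne (by
    rintro ⟨k, rfl⟩
    simp only [Fin.lt_def] at hab
    exact ⟨⟨3 - b.val, by omega⟩, Fin.ext (by simp; omega)⟩)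

theorem colPolarization_v {a b : Fin 4} (hba : b < a) (i : Fin 4) :
    colPolarization a b (v i) = 0 :=
  colPolarization_det_X_eq_zero _ _ hba.ne' (by
    rintro ⟨k, rfl⟩
    simp only [Fin.lt_def] at hba
    exact ⟨⟨b.val, by omega⟩, Fin.ext rfl⟩)

/-- for nonnegative integers `a₁,a₂,a₃,a₄` with `a₁+2a₂+3a₃+4a₄ = n`
(here `e : Fin 4 → ℕ`, `∑ (i+1)·e i = n`), the monomial `v₁^{a₁} v₂^{a₂} v₃^{a₃} v₄^{a₄}`
is homogeneous of degree `n` and is a simultaneous highest-weight vector: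
`K^+_{αβ}` kills it for `β > α` and `K^-_{αβ}` kills it for `β < α`. -/
theorem statement13 (e : Fin 4 → ℕ) (n : ℕ) (h : ∑ i : Fin 4, (i.val + 1) * e i = n) :
    MvPolynomial.IsHomogeneous (∏ i : Fin 4, v i ^ e i) n ∧
    (∀ a b : Fin 4, a < b → Kp a b (∏ i : Fin 4, v i ^ e i) = 0) ∧
    (∀ a b : Fin 4, b < a → Km a b (∏ i : Fin 4, v i ^ e i) = 0) := by
  subst h
  refine ⟨IsHomogeneous.prod _ _ _ fun i _ => (v_isHomogeneous i).pow (e i),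
    fun a b hab => ?_, fun a b hba => ?_⟩
  · rw [Kp_eq_rowPolarization]
    exact (rowPolarization a b).map_prod_pow_eq_zero _ _ _ fun i _ => rowPolarization_v hab i
  · rw [Km_eq_neg_colPolarization, LinearMap.neg_apply, neg_eq_zero]
    exact (colPolarization a b).map_prod_pow_eq_zero _ _ _ fun i _ => colPolarization_v hba i
end
end
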